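/- arXiv:2204.00593 — 2 statements merged into one kernel-verified Lean document; each statement's English description precedes it below -/
import Mathlib

section
/- If F is a potential game with potential f and the protocol is of pairwise comparison class, then along solutions of the Erlang PC-EDM, d/dt f(x̄(t)) = ∑_{i=1}^n ∑_{j=1}^n x_{i,m}(t) φ_{i,j}(p(t)) (p_j(t) − p_i(t)) ≥ 0, i.e., the potential is nondecreasing. -/
/-! Within each strategy's Erlang chain the stages pass mass on at the common rate `λ`, so the
internal flows telescope and `d/dt x̄ᵢ = ∑ⱼ x_{j,m} φ_{j,i}(p) − λ x_{i,m}`. By the chain rule and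
`∇f = F`, `d/dt f(x̄) = ∑ᵢ (d/dt x̄ᵢ) pᵢ`; writing `λ = ∑ⱼ φ_{i,j}(p)` turns this into
`∑ᵢⱼ x_{i,m} φ_{i,j}(p) (pⱼ − pᵢ)`, and every term is nonnegative because `φ_{i,j}(p)` vanishes
unless `pⱼ > pᵢ`. -/

open Finset

theorem Fin.sum_castSucc_sub_succ {M : Type*} [AddCommGroup M] :
    ∀ {k : ℕ} (g : Fin (k + 1) → M), ∑ i : Fin k, (g i.castSucc - g i.succ) = g 0 - g (Fin.last k)
  | 0, g => by simp
  | k + 1, g => by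
    rw [Fin.sum_univ_castSucc]
    simp only [Fin.succ_castSucc]
    rw [Fin.sum_castSucc_sub_succ (fun i => g i.castSucc), Fin.castSucc_zero, Fin.succ_last]
    abel

theorem HasDerivAt.sum_erlangStages {m : ℕ} {y : ℝ → Fin (m + 1) → ℝ} {lam a t : ℝ}
    (h0 : HasDerivAt (fun s => y s 0) (a - lam * y t 0) t)
    (hsucc : ∀ l : Fin m,
      HasDerivAt (fun s => y s l.succ) (lam * (y t l.castSucc - y t l.succ)) t) :
    HasDerivAt (fun s => ∑ l, y s l) (a - lam * y t (Fin.last m)) t := by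
  simp only [Fin.sum_univ_succ (f := y _)]
  refine (h0.add (HasDerivAt.fun_sum fun l _ => hsucc l)).congr_deriv ?_
  rw [← mul_sum, Fin.sum_castSucc_sub_succ (y t)]
  ring

theorem HasDerivAt.comp_eq_sum_mul_partial {ι : Type*} [Fintype ι] [DecidableEq ι]
    {f : (ι → ℝ) → ℝ} {γ : ℝ → ι → ℝ} {γ' G : ι → ℝ} {t : ℝ}
    (hγ : HasDerivAt γ γ' t) (hf : DifferentiableAt ℝ f (γ t))
    (hG : ∀ i, fderiv ℝ f (γ t) (Pi.single i 1) = G i) :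
    HasDerivAt (fun s => f (γ s)) (∑ i, γ' i * G i) t := by
  refine (hf.hasFDerivAt.comp_hasDerivAt t hγ).congr_deriv ?_
  conv_lhs => rw [pi_eq_sum_univ' γ', map_sum]
  simp only [map_smul, hG, smul_eq_mul]

theorem sum_netInflow_mul_eq {ι : Type*} [Fintype ι] (Φ : ι → ι → ℝ) {lam : ℝ}
    (hrow : ∀ i, ∑ j, Φ i j = lam) (z π : ι → ℝ) :
    ∑ i, (∑ j, z j * Φ j i - lam * z i) * π i = ∑ i, ∑ j, z i * Φ i j * (π j - π i) := by
  have hout : ∀ i, lam * z i * π i = ∑ j, z i * Φ i j * π i := fun i => by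
    rw [← sum_mul, ← mul_sum, hrow, mul_comm (z i)]
  simp only [sub_mul, mul_sub, sum_sub_distrib, sum_mul, hout]
  congr 1
  exact sum_comm

theorem mul_rate_mul_sub_nonneg {ι : Type*} {φ : ι → ι → (ι → ℝ) → ℝ}
    (hφ0 : ∀ i j π, i ≠ j → 0 ≤ φ i j π)
    (hzero : ∀ i j (π : ι → ℝ), i ≠ j → π j ≤ π i → φ i j π = 0)
    {a : ℝ} (ha : 0 ≤ a) (π : ι → ℝ) (i j : ι) : 0 ≤ a * φ i j π * (π j - π i) := by
  obtain rfl | hij := eq_or_ne i j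
  · simp
  obtain hle | hlt := le_or_gt (π j) (π i)
  · simp [hzero i j π hij hle]
  · exact mul_nonneg (mul_nonneg ha (hφ0 i j π hij)) (sub_nonneg.2 hlt.le)

theorem erlang_pc_edm_potential_nondecreasing_general {n m : ℕ} (hm : 0 < m)
    (lam : ℝ)
    (F : (Fin n → ℝ) → (Fin n → ℝ))
    (f : (Fin n → ℝ) → ℝ) (hf : ContDiff ℝ 1 f)
    (hgrad : ∀ ξ i, fderiv ℝ f ξ (Pi.single i 1) = F ξ i)
    (φ : Fin n → Fin n → (Fin n → ℝ) → ℝ)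
    (hφ0 : ∀ i j π, i ≠ j → 0 ≤ φ i j π)
    (hzero : ∀ i j (π : Fin n → ℝ), i ≠ j → π j ≤ π i → φ i j π = 0)
    (hrow : ∀ j (π : Fin n → ℝ), ∑ i, φ j i π = lam)
    (x : ℝ → Fin n → Fin m → ℝ)
    (xbar : ℝ → Fin n → ℝ) (hxbar : ∀ t i, xbar t i = ∑ l, x t i l)
    (p : ℝ → Fin n → ℝ) (hp : ∀ t, p t = F (xbar t))
    (hode1 : ∀ t i, HasDerivAt (fun s => x s i ⟨0, hm⟩)
      ((∑ j, x t j ⟨m - 1, Nat.sub_lt hm one_pos⟩ * φ j i (p t))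
        - lam * x t i ⟨0, hm⟩) t)
    (hode2 : ∀ t i (l : Fin m), 0 < l.val →
      HasDerivAt (fun s => x s i l)
        (lam * (x t i ⟨l.val - 1, lt_of_le_of_lt (Nat.sub_le _ _) l.isLt⟩
          - x t i l)) t)
    (hx0 : ∀ t i l, 0 ≤ x t i l) :
    ∀ t, HasDerivAt (fun s => f (xbar s))
        (∑ i, ∑ j, x t i ⟨m - 1, Nat.sub_lt hm one_pos⟩ * φ i j (p t)
          * (p t j - p t i)) t ∧
      0 ≤ ∑ i, ∑ j, x t i ⟨m - 1, Nat.sub_lt hm one_pos⟩ * φ i j (p t)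
          * (p t j - p t i) := by
  obtain ⟨k, rfl⟩ : ∃ k, m = k + 1 := ⟨m - 1, (Nat.succ_pred_eq_of_pos hm).symm⟩
  intro t
  have hxbar_deriv : HasDerivAt xbar
      (fun i => ∑ j, x t j (Fin.last k) * φ j i (p t) - lam * x t i (Fin.last k)) t := by
    rw [hasDerivAt_pi]
    intro i
    simp only [hxbar]
    exact HasDerivAt.sum_erlangStages (hode1 t i) fun l => hode2 t i l.succ l.succ_pos
  refine ⟨?_, sum_nonneg fun i _ => sum_nonneg fun j _ =>
    mul_rate_mul_sub_nonneg hφ0 hzero (hx0 t i _) (p t) i j⟩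
  rw [← sum_netInflow_mul_eq (φ · · (p t)) (hrow · (p t))]
  exact hxbar_deriv.comp_eq_sum_mul_partial (hf.differentiable one_ne_zero _)
    fun i => by rw [hgrad, hp]

/-- If `F` is a potential game with potential `f` (`∇f = F`) and the protocol
is of pairwise comparison class, then along solutions of the Erlang PC-EDM,
`d/dt f(x̄(t)) = ∑ᵢⱼ x_{i,m} φ_{i,j}(p)(pⱼ − pᵢ) ≥ 0`. -/
theorem erlang_pc_edm_potential_nondecreasing {n m : ℕ} (hn : 0 < n) (hm : 0 < m)
    (lam : ℝ) (hlam : 0 < lam)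
    (F : (Fin n → ℝ) → (Fin n → ℝ))
    (f : (Fin n → ℝ) → ℝ) (hf : ContDiff ℝ 1 f)
    (hgrad : ∀ ξ i, fderiv ℝ f ξ (Pi.single i 1) = F ξ i)
    (φ : Fin n → Fin n → (Fin n → ℝ) → ℝ)
    (hφ0 : ∀ i j π, i ≠ j → 0 ≤ φ i j π)
    (hpos : ∀ i j (π : Fin n → ℝ), i ≠ j → π i < π j → 0 < φ i j π)
    (hzero : ∀ i j (π : Fin n → ℝ), i ≠ j → π j ≤ π i → φ i j π = 0)
    (hrow : ∀ j (π : Fin n → ℝ), ∑ i, φ j i π = lam)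
    (x : ℝ → Fin n → Fin m → ℝ)
    (xbar : ℝ → Fin n → ℝ) (hxbar : ∀ t i, xbar t i = ∑ l, x t i l)
    (p : ℝ → Fin n → ℝ) (hp : ∀ t, p t = F (xbar t))
    (hode1 : ∀ t i, HasDerivAt (fun s => x s i ⟨0, hm⟩)
      ((∑ j, x t j ⟨m - 1, Nat.sub_lt hm one_pos⟩ * φ j i (p t))
        - lam * x t i ⟨0, hm⟩) t)
    (hode2 : ∀ t i (l : Fin m), 0 < l.val →
      HasDerivAt (fun s => x s i l)
        (lam * (x t i ⟨l.val - 1, lt_of_le_of_lt (Nat.sub_le _ _) l.isLt⟩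
          - x t i l)) t)
    (hx0 : ∀ t i l, 0 ≤ x t i l) :
    ∀ t, HasDerivAt (fun s => f (xbar s))
        (∑ i, ∑ j, x t i ⟨m - 1, Nat.sub_lt hm one_pos⟩ * φ i j (p t)
          * (p t j - p t i)) t ∧
      0 ≤ ∑ i, ∑ j, x t i ⟨m - 1, Nat.sub_lt hm one_pos⟩ * φ i j (p t)
          * (p t j - p t i) :=
  erlang_pc_edm_potential_nondecreasing_general hm lam F f hf hgrad φ hφ0 hzero hrow x xbar hxbar p
    hp hode1 hode2 hx0
end

section
/- Let φ_j : ℝ → ℝ_{≥0} (j = 1,…,n) be sign-preserving (φ_j(s) > 0 iff s > 0) and define Ψ_j(r) = ∫₀^r φ_j(s)ds. For π ∈ ℝ^n and ξ ∈ Δ, let L(ξ,π) = ∑_{i=1}^n ξ_i ∑_{j=1}^n Ψ_j(π_j − π_i). Then L(ξ,π) ≥ 0, and L(ξ,π) = 0 if and only if for all i with ξ_i > 0 and all j, π_j ≤ π_i; consequently, L(ξ, F(ξ)) = 0 if and only if ξ ∈ NE(F). -/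
/-- The standard probability simplex in `ℝ^n`. -/
def simplex (n : ℕ) : Set (Fin n → ℝ) :=
  {ξ | (∀ i, 0 ≤ ξ i) ∧ ∑ i, ξ i = 1}

/-- The Nash equilibrium set of a population game `F`. -/
def NE {n : ℕ} (F : (Fin n → ℝ) → (Fin n → ℝ)) : Set (Fin n → ℝ) :=
  {ξ ∈ simplex n | ∀ i, 0 < ξ i → ∀ j, F ξ j ≤ F ξ i}

/-- For continuous sign-preserving `φⱼ` with `Ψⱼ(r) = ∫₀^r φⱼ`, the
Hofbauer–Sandholm Lyapunov function `L(ξ,π) = ∑ᵢ ξᵢ ∑ⱼ Ψⱼ(πⱼ − πᵢ)` is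
nonnegative on the simplex, vanishes iff strategies with positive mass have
maximal payoff, and `L(ξ, F(ξ)) = 0 ↔ ξ ∈ NE(F)`. -/
theorem ipc_lyapunov_props {n : ℕ}
    (φ : Fin n → ℝ → ℝ) (hφc : ∀ j, Continuous (φ j))
    (hφ0 : ∀ j s, 0 ≤ φ j s)
    (hpos : ∀ j s, 0 < s → 0 < φ j s) (hzero : ∀ j s, s ≤ 0 → φ j s = 0)
    (Ψ : Fin n → ℝ → ℝ) (hΨ : ∀ j r, Ψ j r = ∫ s in (0:ℝ)..r, φ j s)
    (L : (Fin n → ℝ) → (Fin n → ℝ) → ℝ)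
    (hL : ∀ ξ π, L ξ π = ∑ i, ξ i * ∑ j, Ψ j (π j - π i))
    (F : (Fin n → ℝ) → (Fin n → ℝ)) :
    ∀ ξ ∈ simplex n,
      (∀ π : Fin n → ℝ, 0 ≤ L ξ π) ∧
      (∀ π : Fin n → ℝ, L ξ π = 0 ↔ ∀ i, 0 < ξ i → ∀ j, π j ≤ π i) ∧
      (L ξ (F ξ) = 0 ↔ ξ ∈ NE F) := by
  -- Ψ is zero for nonpositive arguments
  have hΨ0 : ∀ j r, r ≤ 0 → Ψ j r = 0 := by
    intro j r hr
    rw [hΨ, intervalIntegral.integral_symm]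
    have : (∫ s in r..(0:ℝ), φ j s) = ∫ s in r..(0:ℝ), (0:ℝ) := by
      apply intervalIntegral.integral_congr
      intro s hs
      rw [Set.uIcc_of_le hr] at hs
      exact hzero j s hs.2
    rw [this, intervalIntegral.integral_zero, neg_zero]
  -- Ψ is nonnegative
  have hΨnn : ∀ j r, 0 ≤ Ψ j r := by
    intro j r
    rcases le_or_gt r 0 with hr | hr
    · rw [hΨ0 j r hr]
    · rw [hΨ]
      exact intervalIntegral.integral_nonneg hr.le (fun s _ => hφ0 j s)
  -- Ψ is positive on positive arguments
  have hΨpos : ∀ j r, 0 < r → 0 < Ψ j r := by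
    intro j r hr
    rw [hΨ]
    apply intervalIntegral.intervalIntegral_pos_of_pos_on
      ((hφc j).intervalIntegrable 0 r)
    · intro s hs; exact hpos j s hs.1
    · exact hr
  intro ξ hξ
  obtain ⟨hξ0, hξ1⟩ := hξ
  have key : ∀ π : Fin n → ℝ, (0 ≤ L ξ π) ∧
      (L ξ π = 0 ↔ ∀ i, 0 < ξ i → ∀ j, π j ≤ π i) := by
    intro π
    have hterm : ∀ i ∈ Finset.univ, 0 ≤ ξ i * ∑ j, Ψ j (π j - π i) := by
      intro i _
      exact mul_nonneg (hξ0 i) (Finset.sum_nonneg fun j _ => hΨnn j _)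
    constructor
    · rw [hL]; exact Finset.sum_nonneg hterm
    · rw [hL, Finset.sum_eq_zero_iff_of_nonneg hterm]
      constructor
      · intro h i hi j
        have := h i (Finset.mem_univ i)
        have hinner : (∑ j, Ψ j (π j - π i)) = 0 := by
          rcases mul_eq_zero.mp this with h' | h'
          · exact absurd h' hi.ne'
          · exact h'
        have hjz : Ψ j (π j - π i) = 0 := by
          have := (Finset.sum_eq_zero_iff_of_nonneg
            (fun j _ => hΨnn j (π j - π i))).mp hinner j (Finset.mem_univ j)
          exact this
        by_contra hle
        push_neg at hle
        exact absurd hjz (hΨpos j _ (by linarith)).ne'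
      · intro h i _
        rcases (hξ0 i).eq_or_lt with h' | h'
        · rw [← h', zero_mul]
        · have : (∑ j, Ψ j (π j - π i)) = 0 :=
            Finset.sum_eq_zero fun j _ => hΨ0 j _ (by linarith [h i h' j])
          rw [this, mul_zero]
  refine ⟨fun π => (key π).1, fun π => (key π).2, ?_⟩
  rw [(key (F ξ)).2]
  constructor
  · intro h; exact ⟨⟨hξ0, hξ1⟩, h⟩
  · intro h; exact h.2
end
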